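/- arXiv:math/0209160 — 2 statements merged into one kernel-verified Lean document; each statement's English description precedes it below -/
import Mathlib

section
/- Let ψ_δ be a smooth nonnegative mollifier supported in the cube of side δ with ∫ψ_δ=1 and ∫ψ_δ(y)‖y‖²dy = c₀δ² for some constant c₀. Let u:ℝ^d→ℝ be measurable with ‖u‖_∞≤1, and let μ be a probability measure on ℝ^d with density φ², where φ∈H¹(ℝ^d). Then for every ε₁>0, |∫(ψ_δ*u−u)dμ| ≤ (c₀δ²/ε₁)·(1/2)∫‖∇φ‖² dx + 2ε₁. -/
open MeasureTheory
open scoped ENNReal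

lemma stmt3_cs_unit (k : ℝ → ℝ) (hk : Continuous k) :
    (∫ t in Set.Ioc (0:ℝ) 1, |k t|) ^ 2 ≤ ∫ t in Set.Ioc (0:ℝ) 1, (k t) ^ 2 := by
  set m := ∫ t in Set.Ioc (0:ℝ) 1, |k t| with hm
  have hint1 : IntegrableOn (fun t => |k t|) (Set.Ioc (0:ℝ) 1) := hk.abs.integrableOn_Ioc
  have hint2 : IntegrableOn (fun t => (k t) ^ 2) (Set.Ioc (0:ℝ) 1) := (hk.pow 2).integrableOn_Ioc
  have h0 : (0:ℝ) ≤ ∫ t in Set.Ioc (0:ℝ) 1, (|k t| - m) ^ 2 :=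
    integral_nonneg fun t => sq_nonneg _
  have e1 : ∫ t in Set.Ioc (0:ℝ) 1, (|k t| - m) ^ 2
      = ∫ t in Set.Ioc (0:ℝ) 1, ((k t) ^ 2 - (2*m) * |k t| + m ^ 2) := by
    refine integral_congr_ae (Filter.Eventually.of_forall fun t => ?_)
    simp only []; rw [sub_sq, sq_abs]; ring
  have e2 : ∫ t in Set.Ioc (0:ℝ) 1, ((k t) ^ 2 - (2*m) * |k t| + m ^ 2)
      = (∫ t in Set.Ioc (0:ℝ) 1, ((k t) ^ 2 - (2*m) * |k t|))
        + ∫ t in Set.Ioc (0:ℝ) 1, (m ^ 2 : ℝ) :=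
    integral_add (hint2.sub (hint1.const_mul _)) (integrableOn_const (by simp))
  have e3 : ∫ t in Set.Ioc (0:ℝ) 1, ((k t) ^ 2 - (2*m) * |k t|)
      = (∫ t in Set.Ioc (0:ℝ) 1, (k t) ^ 2) - ∫ t in Set.Ioc (0:ℝ) 1, (2*m) * |k t| :=
    integral_sub hint2 (hint1.const_mul _)
  have e4 : ∫ t in Set.Ioc (0:ℝ) 1, (2*m) * |k t| = (2*m) * m := by
    rw [integral_const_mul, ← hm]
  have e5 : ∫ t in Set.Ioc (0:ℝ) 1, (m ^ 2 : ℝ) = m ^ 2 := by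
    rw [setIntegral_const]; simp [Real.volume_Ioc]
  nlinarith [h0, e1, e2, e3, e4, e5]

lemma stmt3_grad_cont {d : ℕ} (φ : EuclideanSpace ℝ (Fin d) → ℝ) (hφ : ContDiff ℝ 1 φ) :
    Continuous (fun x => gradient φ x) :=
  (InnerProductSpace.toDual ℝ _).symm.continuous.comp (hφ.continuous_fderiv one_ne_zero)

lemma stmt3_ptwise {d : ℕ} (φ : EuclideanSpace ℝ (Fin d) → ℝ) (hφ : ContDiff ℝ 1 φ)
    (z y : EuclideanSpace ℝ (Fin d)) :
    (φ (z + y) - φ z) ^ 2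
      ≤ ‖y‖ ^ 2 * ∫ t in Set.Ioc (0:ℝ) 1, ‖gradient φ (z + t • y)‖ ^ 2 := by
  set k : ℝ → ℝ := fun t => (fderiv ℝ φ (z + t • y)) y with hkdef
  have hc : Continuous k := by
    exact ((hφ.continuous_fderiv one_ne_zero).comp
      (continuous_const.add (continuous_id.smul continuous_const))).clm_apply continuous_const
  have hftc : ∫ t in (0:ℝ)..1, k t = φ (z + y) - φ z := by
    have h : ∀ t ∈ Set.uIcc (0:ℝ) 1, HasDerivAt (fun s : ℝ => φ (z + s • y)) (k t) t := by
      intro t _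
      have h1 : HasDerivAt (fun s : ℝ => z + s • y) y t := by
        simpa using ((hasDerivAt_id t).smul_const y).const_add z
      exact ((hφ.differentiable one_ne_zero) (z + t • y)).hasFDerivAt.comp_hasDerivAt t h1
    simpa using intervalIntegral.integral_eq_sub_of_hasDerivAt h (hc.intervalIntegrable 0 1)
  have habs : |φ (z + y) - φ z| ≤ ∫ t in Set.Ioc (0:ℝ) 1, |k t| := by
    rw [← hftc]
    have h1 := intervalIntegral.abs_integral_le_integral_abs (μ := volume) (f := k) (a := (0:ℝ)) (b := 1)
      (by norm_num)
    rw [intervalIntegral.integral_of_le (by norm_num : (0:ℝ) ≤ 1),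
      intervalIntegral.integral_of_le (by norm_num : (0:ℝ) ≤ 1)] at h1
    rw [intervalIntegral.integral_of_le (by norm_num : (0:ℝ) ≤ 1)]
    exact h1
  have hcs := stmt3_cs_unit k hc
  have hptk : ∀ t : ℝ, (k t) ^ 2 ≤ ‖gradient φ (z + t • y)‖ ^ 2 * ‖y‖ ^ 2 := by
    intro t
    have h1 : |k t| ≤ ‖fderiv ℝ φ (z + t • y)‖ * ‖y‖ := by
      simpa [Real.norm_eq_abs] using (fderiv ℝ φ (z + t • y)).le_opNorm y
    have h2 : ‖gradient φ (z + t • y)‖ = ‖fderiv ℝ φ (z + t • y)‖ := by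
      rw [gradient]; exact LinearIsometryEquiv.norm_map _ _
    rw [← sq_abs, h2]
    calc |k t| ^ 2 ≤ (‖fderiv ℝ φ (z + t • y)‖ * ‖y‖) ^ 2 := by
          apply pow_le_pow_left₀ (abs_nonneg _) h1
      _ = ‖fderiv ℝ φ (z + t • y)‖ ^ 2 * ‖y‖ ^ 2 := by ring
  have hik2 : IntegrableOn (fun t => (k t) ^ 2) (Set.Ioc (0:ℝ) 1) := (hc.pow 2).integrableOn_Ioc
  have higrad : IntegrableOn (fun t => ‖gradient φ (z + t • y)‖ ^ 2 * ‖y‖ ^ 2)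
      (Set.Ioc (0:ℝ) 1) := by
    apply Continuous.integrableOn_Ioc
    exact ((((stmt3_grad_cont φ hφ).comp
      (continuous_const.add (continuous_id.smul continuous_const))).norm.pow 2).mul
      continuous_const)
  have hmono : ∫ t in Set.Ioc (0:ℝ) 1, (k t) ^ 2
      ≤ ∫ t in Set.Ioc (0:ℝ) 1, ‖gradient φ (z + t • y)‖ ^ 2 * ‖y‖ ^ 2 :=
    setIntegral_mono hik2 higrad hptk
  have hend : ∫ t in Set.Ioc (0:ℝ) 1, ‖gradient φ (z + t • y)‖ ^ 2 * ‖y‖ ^ 2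
      = ‖y‖ ^ 2 * ∫ t in Set.Ioc (0:ℝ) 1, ‖gradient φ (z + t • y)‖ ^ 2 := by
    rw [integral_mul_const]; ring
  calc (φ (z + y) - φ z) ^ 2 = |φ (z + y) - φ z| ^ 2 := (sq_abs _).symm
    _ ≤ (∫ t in Set.Ioc (0:ℝ) 1, |k t|) ^ 2 := by
        apply pow_le_pow_left₀ (abs_nonneg _) habs
    _ ≤ ∫ t in Set.Ioc (0:ℝ) 1, (k t) ^ 2 := hcs
    _ ≤ _ := by rw [← hend]; exact hmono

lemma stmt3_translate {d : ℕ} (φ : EuclideanSpace ℝ (Fin d) → ℝ) (hφ : ContDiff ℝ 1 φ)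
    (hφ_sq_int : Integrable (fun x => (φ x) ^ 2))
    (hgrad_int : Integrable (fun x => ‖gradient φ x‖ ^ 2))
    (y : EuclideanSpace ℝ (Fin d)) :
    ∫ z, (φ (z + y) - φ z) ^ 2 ≤ ‖y‖ ^ 2 * ∫ x, ‖gradient φ x‖ ^ 2 := by
  have hφc := hφ.continuous
  have hgc := stmt3_grad_cont φ hφ
  set G2 := ∫ x, ‖gradient φ x‖ ^ 2 with hG2
  have hG2nn : 0 ≤ G2 := integral_nonneg fun x => sq_nonneg _
  -- integrability of the difference squared
  have hΔint : Integrable (fun z => (φ (z + y) - φ z) ^ 2) := by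
    have h1 : Integrable (fun z => (φ (z + y)) ^ 2) := hφ_sq_int.comp_add_right y
    refine Integrable.mono' ((h1.const_mul 2).add (hφ_sq_int.const_mul 2))
      ((hφc.comp (continuous_id.add continuous_const)).sub hφc |>.pow 2).aestronglyMeasurable
      (Filter.Eventually.of_forall fun z => ?_)
    rw [Real.norm_eq_abs, abs_of_nonneg (sq_nonneg _)]
    simp only [Pi.add_apply]
    nlinarith [sq_nonneg (φ (z + y) + φ z)]
  -- continuous inner function
  have hcontin : Continuous fun p : (EuclideanSpace ℝ (Fin d)) × ℝ =>
      ‖gradient φ (p.1 + p.2 • y)‖ ^ 2 :=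
    ((hgc.comp (continuous_fst.add (continuous_snd.smul continuous_const))).norm.pow 2)
  have key : ∀ z, ENNReal.ofReal ((φ (z + y) - φ z) ^ 2)
      ≤ ∫⁻ t in Set.Ioc (0:ℝ) 1, ENNReal.ofReal (‖y‖ ^ 2 * ‖gradient φ (z + t • y)‖ ^ 2) := by
    intro z
    have h1 := stmt3_ptwise φ hφ z y
    have hint : IntegrableOn (fun t => ‖y‖ ^ 2 * ‖gradient φ (z + t • y)‖ ^ 2)
        (Set.Ioc (0:ℝ) 1) := by
      apply Continuous.integrableOn_Ioc
      exact continuous_const.mul ((hgc.comp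
        (continuous_const.add (continuous_id.smul continuous_const))).norm.pow 2)
    have h2 : ENNReal.ofReal (‖y‖ ^ 2 * ∫ t in Set.Ioc (0:ℝ) 1, ‖gradient φ (z + t • y)‖ ^ 2)
        = ∫⁻ t in Set.Ioc (0:ℝ) 1, ENNReal.ofReal (‖y‖ ^ 2 * ‖gradient φ (z + t • y)‖ ^ 2) := by
      rw [← integral_const_mul]
      exact ofReal_integral_eq_lintegral_ofReal hint
        (Filter.Eventually.of_forall fun t => by positivity)
    rw [← h2]
    exact ENNReal.ofReal_le_ofReal h1
  have hswap : ∫⁻ z, ∫⁻ t in Set.Ioc (0:ℝ) 1,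
        ENNReal.ofReal (‖y‖ ^ 2 * ‖gradient φ (z + t • y)‖ ^ 2)
      = ∫⁻ t in Set.Ioc (0:ℝ) 1, ∫⁻ z,
        ENNReal.ofReal (‖y‖ ^ 2 * ‖gradient φ (z + t • y)‖ ^ 2) := by
    apply lintegral_lintegral_swap
    exact (ENNReal.measurable_ofReal.comp
      (continuous_const.mul hcontin).measurable).aemeasurable
  have hinner : ∀ t : ℝ, ∫⁻ z, ENNReal.ofReal (‖y‖ ^ 2 * ‖gradient φ (z + t • y)‖ ^ 2)
      = ENNReal.ofReal (‖y‖ ^ 2 * G2) := by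
    intro t
    have h1 := lintegral_add_right_eq_self (μ := volume)
      (f := fun z => ENNReal.ofReal (‖y‖ ^ 2 * ‖gradient φ z‖ ^ 2)) (t • y)
    rw [h1, ← ofReal_integral_eq_lintegral_ofReal (hgrad_int.const_mul _)
      (Filter.Eventually.of_forall fun x => by positivity), integral_const_mul]
  have hfinal : ∫⁻ z, ENNReal.ofReal ((φ (z + y) - φ z) ^ 2)
      ≤ ENNReal.ofReal (‖y‖ ^ 2 * G2) := by
    calc ∫⁻ z, ENNReal.ofReal ((φ (z + y) - φ z) ^ 2)
        ≤ ∫⁻ z, ∫⁻ t in Set.Ioc (0:ℝ) 1,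
            ENNReal.ofReal (‖y‖ ^ 2 * ‖gradient φ (z + t • y)‖ ^ 2) := lintegral_mono key
      _ = ∫⁻ t in Set.Ioc (0:ℝ) 1, ∫⁻ z,
            ENNReal.ofReal (‖y‖ ^ 2 * ‖gradient φ (z + t • y)‖ ^ 2) := hswap
      _ = ∫⁻ t in Set.Ioc (0:ℝ) 1, ENNReal.ofReal (‖y‖ ^ 2 * G2) := by
            refine setLIntegral_congr_fun measurableSet_Ioc
              (fun t _ => hinner t)
      _ = ENNReal.ofReal (‖y‖ ^ 2 * G2) * volume (Set.Ioc (0:ℝ) 1) := setLIntegral_const _ _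
      _ = ENNReal.ofReal (‖y‖ ^ 2 * G2) := by
            rw [Real.volume_Ioc]; norm_num
  have h3 : ENNReal.ofReal (∫ z, (φ (z + y) - φ z) ^ 2) ≤ ENNReal.ofReal (‖y‖ ^ 2 * G2) := by
    rw [ofReal_integral_eq_lintegral_ofReal hΔint
      (Filter.Eventually.of_forall fun z => sq_nonneg _)]
    exact hfinal
  exact (ENNReal.ofReal_le_ofReal_iff (by positivity)).1 h3

lemma stmt3_By {d : ℕ} (φ u : EuclideanSpace ℝ (Fin d) → ℝ) (hφ : ContDiff ℝ 1 φ)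
    (hφ_sq_int : Integrable (fun x => (φ x) ^ 2))
    (hφ_prob : ∫ x, (φ x) ^ 2 = 1)
    (hgrad_int : Integrable (fun x => ‖gradient φ x‖ ^ 2))
    (hu_meas : Measurable u) (hu_bdd : ∀ x, |u x| ≤ 1)
    (y : EuclideanSpace ℝ (Fin d)) :
    |∫ z, u z * ((φ (z + y)) ^ 2 - (φ z) ^ 2)|
      ≤ 2 * ‖y‖ * Real.sqrt (∫ x, ‖gradient φ x‖ ^ 2) := by
  have hφc := hφ.continuous
  set G2 := ∫ x, ‖gradient φ x‖ ^ 2 with hG2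
  have hG2nn : 0 ≤ G2 := integral_nonneg fun x => sq_nonneg _
  have hshift : Integrable (fun z => (φ (z + y)) ^ 2) := hφ_sq_int.comp_add_right y
  have hdiff_int : Integrable (fun z => (φ (z + y)) ^ 2 - (φ z) ^ 2) := hshift.sub hφ_sq_int
  have hu_int : Integrable (fun z => u z * ((φ (z + y)) ^ 2 - (φ z) ^ 2)) := by
    refine Integrable.mono' hdiff_int.abs
      (hu_meas.mul (((hφc.comp (continuous_id.add continuous_const)).pow 2).sub
        (hφc.pow 2)).measurable).aestronglyMeasurable
      (Filter.Eventually.of_forall fun z => ?_)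
    rw [Real.norm_eq_abs, abs_mul]
    exact mul_le_of_le_one_left (abs_nonneg _) (hu_bdd z)
  -- step 1: |∫| ≤ ∫|diff|
  have step1 : |∫ z, u z * ((φ (z + y)) ^ 2 - (φ z) ^ 2)|
      ≤ ∫ z, |(φ (z + y)) ^ 2 - (φ z) ^ 2| := by
    calc |∫ z, u z * ((φ (z + y)) ^ 2 - (φ z) ^ 2)|
        ≤ ∫ z, |u z * ((φ (z + y)) ^ 2 - (φ z) ^ 2)| := by
          exact
            norm_integral_le_integral_norm (μ := volume) (fun z => u z * ((φ (z + y)) ^ 2 - (φ z) ^ 2))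
      _ ≤ ∫ z, |(φ (z + y)) ^ 2 - (φ z) ^ 2| := by
          refine integral_mono hu_int.abs hdiff_int.abs fun z => ?_
          rw [abs_mul]
          exact mul_le_of_le_one_left (abs_nonneg _) (hu_bdd z)
  -- rewrite |a²-b²| = |a-b| * |a+b|
  have step2 : ∫ z, |(φ (z + y)) ^ 2 - (φ z) ^ 2|
      = ∫ z, |φ (z + y) - φ z| * |φ (z + y) + φ z| := by
    refine integral_congr_ae (Filter.Eventually.of_forall fun z => ?_)
    simp only []; rw [← abs_mul]; congr 1; ring
  -- L² facts
  have hΔint : Integrable (fun z => (φ (z + y) - φ z) ^ 2) := by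
    refine Integrable.mono' ((hshift.const_mul 2).add (hφ_sq_int.const_mul 2))
      ((hφc.comp (continuous_id.add continuous_const)).sub hφc |>.pow 2).aestronglyMeasurable
      (Filter.Eventually.of_forall fun z => ?_)
    rw [Real.norm_eq_abs, abs_of_nonneg (sq_nonneg _)]
    simp only [Pi.add_apply]
    nlinarith [sq_nonneg (φ (z + y) + φ z)]
  have hSumint : Integrable (fun z => (φ (z + y) + φ z) ^ 2) := by
    refine Integrable.mono' ((hshift.const_mul 2).add (hφ_sq_int.const_mul 2))
      ((hφc.comp (continuous_id.add continuous_const)).add hφc |>.pow 2).aestronglyMeasurable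
      (Filter.Eventually.of_forall fun z => ?_)
    rw [Real.norm_eq_abs, abs_of_nonneg (sq_nonneg _)]
    simp only [Pi.add_apply]
    nlinarith [sq_nonneg (φ (z + y) - φ z)]
  have hmemΔ : MemLp (fun z => |φ (z + y) - φ z|) (ENNReal.ofReal 2) := by
    rw [ENNReal.ofReal_ofNat]
    have h := (memLp_two_iff_integrable_sq
      (((hφc.comp (continuous_id.add continuous_const)).sub hφc).aestronglyMeasurable)).2 hΔint
    simpa [Real.norm_eq_abs] using h.norm
  have hmemSum : MemLp (fun z => |φ (z + y) + φ z|) (ENNReal.ofReal 2) := by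
    rw [ENNReal.ofReal_ofNat]
    have h := (memLp_two_iff_integrable_sq
      (((hφc.comp (continuous_id.add continuous_const)).add hφc).aestronglyMeasurable)).2 hSumint
    simpa [Real.norm_eq_abs] using h.norm
  -- Hölder
  have hconj : Real.HolderConjugate 2 2 := ⟨by norm_num, by norm_num, by norm_num⟩
  have holder := integral_mul_le_Lp_mul_Lq_of_nonneg hconj
    (Filter.Eventually.of_forall fun z => abs_nonneg (φ (z + y) - φ z))
    (Filter.Eventually.of_forall fun z => abs_nonneg (φ (z + y) + φ z)) hmemΔ hmemSum
  -- convert rpow to pow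
  have hrw : ∀ g : EuclideanSpace ℝ (Fin d) → ℝ,
      (∫ z, |g z| ^ (2:ℝ)) = ∫ z, |g z| ^ (2:ℕ) := by
    intro g
    refine integral_congr_ae (Filter.Eventually.of_forall fun z => ?_)
    simp only []
    rw [← Real.rpow_natCast |g z| 2]; norm_num
  have hA : ∫ z, |φ (z + y) - φ z| ^ (2:ℕ) ≤ ‖y‖ ^ 2 * G2 := by
    have := stmt3_translate φ hφ hφ_sq_int hgrad_int y
    calc ∫ z, |φ (z + y) - φ z| ^ (2:ℕ) = ∫ z, (φ (z + y) - φ z) ^ 2 := by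
          refine integral_congr_ae (Filter.Eventually.of_forall fun z => ?_)
          simp only []; rw [sq_abs]
      _ ≤ ‖y‖ ^ 2 * G2 := this
  have hB : ∫ z, |φ (z + y) + φ z| ^ (2:ℕ) ≤ 4 := by
    have e : ∫ z, |φ (z + y) + φ z| ^ (2:ℕ) = ∫ z, (φ (z + y) + φ z) ^ 2 := by
      refine integral_congr_ae (Filter.Eventually.of_forall fun z => ?_)
      simp only []; rw [sq_abs]
    rw [e]
    have hle : ∫ z, (φ (z + y) + φ z) ^ 2
        ≤ ∫ z, (2 * (φ (z + y)) ^ 2 + 2 * (φ z) ^ 2) := by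
      refine integral_mono hSumint ((hshift.const_mul 2).add (hφ_sq_int.const_mul 2)) fun z => ?_
      nlinarith [sq_nonneg (φ (z + y) - φ z)]
    have he2 : ∫ z, (2 * (φ (z + y)) ^ 2 + 2 * (φ z) ^ 2) = 4 := by
      rw [integral_add (hshift.const_mul 2) (hφ_sq_int.const_mul 2), integral_const_mul,
        integral_const_mul]
      have : ∫ z, (φ (z + y)) ^ 2 = 1 := by
        rw [integral_add_right_eq_self (μ := volume) (fun x => (φ x) ^ 2) y, hφ_prob]
      rw [this, hφ_prob]; norm_num
    linarith
  -- assemble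
  have hR1 : (∫ z, |φ (z + y) - φ z| ^ (2:ℝ)) ^ ((1:ℝ)/2) ≤ ‖y‖ * Real.sqrt G2 := by
    rw [hrw]
    calc (∫ z, |φ (z + y) - φ z| ^ (2:ℕ)) ^ ((1:ℝ)/2)
        ≤ (‖y‖ ^ 2 * G2) ^ ((1:ℝ)/2) :=
          Real.rpow_le_rpow (integral_nonneg fun z => by positivity) hA (by norm_num)
      _ = ‖y‖ * Real.sqrt G2 := by
          rw [← Real.sqrt_eq_rpow, Real.sqrt_mul (by positivity), Real.sqrt_sq (norm_nonneg _)]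
  have hR2 : (∫ z, |φ (z + y) + φ z| ^ (2:ℝ)) ^ ((1:ℝ)/2) ≤ 2 := by
    rw [hrw]
    calc (∫ z, |φ (z + y) + φ z| ^ (2:ℕ)) ^ ((1:ℝ)/2)
        ≤ (4:ℝ) ^ ((1:ℝ)/2) :=
          Real.rpow_le_rpow (integral_nonneg fun z => by positivity) hB (by norm_num)
      _ = 2 := by
          rw [← Real.sqrt_eq_rpow]
          rw [show (4:ℝ) = 2 ^ 2 by norm_num, Real.sqrt_sq (by norm_num)]
  calc |∫ z, u z * ((φ (z + y)) ^ 2 - (φ z) ^ 2)|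
      ≤ ∫ z, |φ (z + y) - φ z| * |φ (z + y) + φ z| := step1.trans (le_of_eq step2)
    _ ≤ (∫ z, |φ (z + y) - φ z| ^ (2:ℝ)) ^ ((1:ℝ)/2)
        * (∫ z, |φ (z + y) + φ z| ^ (2:ℝ)) ^ ((1:ℝ)/2) := holder
    _ ≤ (‖y‖ * Real.sqrt G2) * 2 := by
        refine mul_le_mul hR1 hR2 (Real.rpow_nonneg (integral_nonneg fun z => by positivity) _)
          (by positivity)
    _ = 2 * ‖y‖ * Real.sqrt G2 := by ring

/-- Let `ψδ` be a smooth nonnegative mollifier supported in the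
cube of side `δ`, with `∫ψδ = 1` and `∫ ψδ(y) ‖y‖² dy = c₀ δ²`.  Let `u` be
measurable with `‖u‖_∞ ≤ 1`, and let `μ` be a probability measure with
density `φ²`, `φ ∈ H¹(ℝ^d)`.  Then for every `ε₁ > 0`,
`|∫ (ψδ*u − u) dμ| ≤ (c₀δ²/ε₁)·(1/2)∫‖∇φ‖² + 2ε₁`. -/
theorem stmt3 {d : ℕ} (δ c₀ ε₁ : ℝ) (hδ : 0 < δ) (hc₀ : 0 < c₀) (hε₁ : 0 < ε₁)
    (ψδ : EuclideanSpace ℝ (Fin d) → ℝ)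
    (hψ_smooth : ContDiff ℝ (⊤ : ℕ∞) ψδ)
    (hψ_nonneg : ∀ x, 0 ≤ ψδ x)
    (hψ_supp : ∀ x, ψδ x ≠ 0 → ∀ i, |x i| ≤ δ / 2)
    (hψ_int : ∫ x, ψδ x = 1)
    (hψ_mom : ∫ x, ψδ x * ‖x‖ ^ 2 = c₀ * δ ^ 2)
    (u : EuclideanSpace ℝ (Fin d) → ℝ)
    (hu_meas : Measurable u) (hu_bdd : ∀ x, |u x| ≤ 1)
    (φ : EuclideanSpace ℝ (Fin d) → ℝ)
    (hφ : ContDiff ℝ 1 φ)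
    (hφ_sq_int : Integrable (fun x => (φ x) ^ 2))
    (hφ_prob : ∫ x, (φ x) ^ 2 = 1)
    (hgrad_int : Integrable (fun x => ‖gradient φ x‖ ^ 2)) :
    |∫ x, ((∫ y, ψδ y * u (x - y)) - u x) * (φ x) ^ 2| ≤
      (c₀ * δ ^ 2 / ε₁) * (1 / 2 * ∫ x, ‖gradient φ x‖ ^ 2) + 2 * ε₁ := by
  have hφc := hφ.continuous
  have hψc := hψ_smooth.continuous
  set G2 := ∫ x, ‖gradient φ x‖ ^ 2 with hG2
  have hG2nn : 0 ≤ G2 := integral_nonneg fun x => sq_nonneg _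
  -- compact support of ψδ
  have hψ_cs : HasCompactSupport ψδ := by
    apply HasCompactSupport.intro (K := Metric.closedBall 0 (Real.sqrt d * (δ / 2)))
      (isCompact_closedBall _ _)
    intro x hx
    by_contra h
    apply hx
    simp only [Metric.mem_closedBall, dist_zero_right]
    have hb := hψ_supp x h
    rw [EuclideanSpace.norm_eq]
    have hsum : ∑ i, ‖x i‖ ^ 2 ≤ (d : ℝ) * (δ / 2) ^ 2 := by
      calc ∑ i, ‖x i‖ ^ 2 ≤ ∑ _i : Fin d, (δ / 2) ^ 2 := by
            refine Finset.sum_le_sum fun i _ => ?_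
            rw [Real.norm_eq_abs]
            exact pow_le_pow_left₀ (abs_nonneg _) (hb i) 2
        _ = (d : ℝ) * (δ / 2) ^ 2 := by simp [Finset.sum_const, nsmul_eq_mul]
    calc Real.sqrt (∑ i, ‖x i‖ ^ 2) ≤ Real.sqrt ((d : ℝ) * (δ / 2) ^ 2) :=
          Real.sqrt_le_sqrt hsum
      _ = Real.sqrt d * (δ / 2) := by
          rw [Real.sqrt_mul (Nat.cast_nonneg d), Real.sqrt_sq (by linarith)]
  have hψ_integrable : Integrable ψδ := hψc.integrable_of_hasCompactSupport hψ_cs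
  have hψ_mom_integrable : Integrable (fun y => ψδ y * ‖y‖ ^ 2) :=
    (hψc.mul (continuous_norm.pow 2)).integrable_of_hasCompactSupport (hψ_cs.mul_right)
  -- convolution bounded by 1
  have hconv_int : ∀ x, Integrable (fun y => ψδ y * u (x - y)) := by
    intro x
    refine Integrable.mono' hψ_integrable
      ((hψc.measurable.mul (hu_meas.comp (measurable_const.sub measurable_id))).aestronglyMeasurable)
      (Filter.Eventually.of_forall fun y => ?_)
    rw [Real.norm_eq_abs, abs_mul, abs_of_nonneg (hψ_nonneg y)]
    exact mul_le_of_le_one_right (hψ_nonneg y) (hu_bdd _)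
  have hconv_bdd : ∀ x, |∫ y, ψδ y * u (x - y)| ≤ 1 := by
    intro x
    calc |∫ y, ψδ y * u (x - y)| ≤ ∫ y, |ψδ y * u (x - y)| := by
          exact norm_integral_le_integral_norm (μ := volume) (fun y => ψδ y * u (x - y))
      _ ≤ ∫ y, ψδ y := by
          refine integral_mono (hconv_int x).abs hψ_integrable fun y => ?_
          rw [abs_mul, abs_of_nonneg (hψ_nonneg y)]
          exact mul_le_of_le_one_right (hψ_nonneg y) (hu_bdd _)
      _ = 1 := hψ_int
  -- Fubini setup
  set F : EuclideanSpace ℝ (Fin d) × EuclideanSpace ℝ (Fin d) → ℝ :=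
    fun p => ψδ p.2 * u (p.1 - p.2) * (φ p.1) ^ 2 with hF
  have hF_meas : AEStronglyMeasurable F (volume.prod volume) := by
    exact (((hψc.measurable.comp measurable_snd).mul
      (hu_meas.comp (measurable_fst.sub measurable_snd))).mul
      ((hφc.measurable.comp measurable_fst).pow measurable_const)).aestronglyMeasurable
  have hF_int : Integrable F (volume.prod volume) := by
    refine Integrable.mono' (hφ_sq_int.mul_prod hψ_integrable) hF_meas
      (Filter.Eventually.of_forall fun p => ?_)
    rw [Real.norm_eq_abs, hF]
    simp only []
    rw [abs_mul, abs_mul, abs_of_nonneg (hψ_nonneg p.2), abs_of_nonneg (sq_nonneg (φ p.1))]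
    calc ψδ p.2 * |u (p.1 - p.2)| * (φ p.1) ^ 2 ≤ ψδ p.2 * 1 * (φ p.1) ^ 2 := by
          apply mul_le_mul_of_nonneg_right (mul_le_mul_of_nonneg_left (hu_bdd _) (hψ_nonneg _))
            (sq_nonneg _)
      _ = (φ p.1) ^ 2 * ψδ p.2 := by ring
  -- swap
  have hswap : ∫ x, ∫ y, ψδ y * u (x - y) * (φ x) ^ 2
      = ∫ y, ∫ x, ψδ y * u (x - y) * (φ x) ^ 2 :=
    integral_integral_swap (f := fun x y => ψδ y * u (x - y) * (φ x) ^ 2) hF_int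
  -- inner translate
  have htrans : ∀ y, ∫ x, u (x - y) * (φ x) ^ 2 = ∫ z, u z * (φ (z + y)) ^ 2 := by
    intro y
    have h := integral_add_right_eq_self (μ := volume) (fun x => u (x - y) * (φ x) ^ 2) y
    rw [← h]
    refine integral_congr_ae (Filter.Eventually.of_forall fun z => ?_)
    simp [add_sub_cancel_right]
  -- integrabilities for the inner z-integrals
  have hu2 : Integrable (fun x => u x * (φ x) ^ 2) := by
    refine Integrable.mono' hφ_sq_int
      ((hu_meas.mul ((hφc.pow 2).measurable)).aestronglyMeasurable)
      (Filter.Eventually.of_forall fun x => ?_)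
    rw [Real.norm_eq_abs, abs_mul, abs_of_nonneg (sq_nonneg (φ x))]
    exact mul_le_of_le_one_left (sq_nonneg _) (hu_bdd x)
  have hu1 : ∀ y, Integrable (fun z => u z * (φ (z + y)) ^ 2) := by
    intro y
    refine Integrable.mono' (hφ_sq_int.comp_add_right y)
      ((hu_meas.mul (((hφc.comp (continuous_id.add continuous_const)).pow 2).measurable)).aestronglyMeasurable)
      (Filter.Eventually.of_forall fun z => ?_)
    rw [Real.norm_eq_abs, abs_mul, abs_of_nonneg (sq_nonneg (φ (z + y)))]
    exact mul_le_of_le_one_left (sq_nonneg _) (hu_bdd z)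
  -- the convolution is a.e.-strongly measurable in x
  have hconv_meas : AEStronglyMeasurable (fun x => ∫ y, ψδ y * u (x - y)) volume := by
    have : AEStronglyMeasurable
        (fun p : EuclideanSpace ℝ (Fin d) × EuclideanSpace ℝ (Fin d) =>
          ψδ p.2 * u (p.1 - p.2)) (volume.prod volume) :=
      ((hψc.measurable.comp measurable_snd).mul
        (hu_meas.comp (measurable_fst.sub measurable_snd))).aestronglyMeasurable
    exact this.integral_prod_right'
  have hT1 : Integrable (fun x => (∫ y, ψδ y * u (x - y)) * (φ x) ^ 2) := by
    refine Integrable.mono' hφ_sq_int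
      (hconv_meas.mul ((hφc.pow 2).measurable.aestronglyMeasurable))
      (Filter.Eventually.of_forall fun x => ?_)
    rw [Real.norm_eq_abs, abs_mul, abs_of_nonneg (sq_nonneg (φ x))]
    exact mul_le_of_le_one_left (sq_nonneg _) (hconv_bdd x)
  -- split the LHS
  have hsplit : ∫ x, ((∫ y, ψδ y * u (x - y)) - u x) * (φ x) ^ 2
      = (∫ x, (∫ y, ψδ y * u (x - y)) * (φ x) ^ 2) - ∫ x, u x * (φ x) ^ 2 := by
    rw [← integral_sub hT1 hu2]
    refine integral_congr_ae (Filter.Eventually.of_forall fun x => ?_)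
    simp only []; ring
  -- first term
  have e1 : ∫ x, (∫ y, ψδ y * u (x - y)) * (φ x) ^ 2
      = ∫ x, ∫ y, ψδ y * u (x - y) * (φ x) ^ 2 := by
    refine integral_congr_ae (Filter.Eventually.of_forall fun x => ?_)
    simp only []
    rw [← integral_mul_const]
  have e2 : ∀ y, ∫ x, ψδ y * u (x - y) * (φ x) ^ 2
      = ψδ y * ∫ z, u z * (φ (z + y)) ^ 2 := by
    intro y
    rw [← htrans y, ← integral_const_mul]
    refine integral_congr_ae (Filter.Eventually.of_forall fun x => ?_)
    simp only []; ring
  -- second term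
  have e3 : ∫ x, u x * (φ x) ^ 2 = ∫ y, ψδ y * ∫ x, u x * (φ x) ^ 2 := by
    rw [integral_mul_const, hψ_int, one_mul]
  -- integrability in y
  have hIA : Integrable (fun y => ψδ y * ∫ z, u z * (φ (z + y)) ^ 2) := by
    have h := hF_int.integral_prod_right
    refine h.congr (Filter.Eventually.of_forall fun y => ?_)
    simp only [hF]
    exact e2 y
  have hIC : Integrable (fun y => ψδ y * ∫ x, u x * (φ x) ^ 2) :=
    hψ_integrable.mul_const _
  -- main identity
  have hmain : ∫ x, ((∫ y, ψδ y * u (x - y)) - u x) * (φ x) ^ 2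
      = ∫ y, ψδ y * ∫ z, u z * ((φ (z + y)) ^ 2 - (φ z) ^ 2) := by
    rw [hsplit, e1, hswap, e3]
    have e4 : ∫ y, ∫ x, ψδ y * u (x - y) * (φ x) ^ 2
        = ∫ y, ψδ y * ∫ z, u z * (φ (z + y)) ^ 2 :=
      integral_congr_ae (Filter.Eventually.of_forall fun y => e2 y)
    rw [e4, ← integral_sub hIA hIC]
    refine integral_congr_ae (Filter.Eventually.of_forall fun y => ?_)
    simp only []
    rw [← mul_sub, ← integral_sub (hu1 y) hu2]
    congr 1
    refine integral_congr_ae (Filter.Eventually.of_forall fun z => ?_)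
    simp only []; ring
  -- the per-y bound
  have hBy : ∀ y : EuclideanSpace ℝ (Fin d),
      |∫ z, u z * ((φ (z + y)) ^ 2 - (φ z) ^ 2)| ≤ 2 * ‖y‖ * Real.sqrt G2 :=
    fun y => stmt3_By φ u hφ hφ_sq_int hφ_prob hgrad_int hu_meas hu_bdd y
  -- integrability of y ↦ ψδ y * B y
  have hIB : Integrable (fun y => ψδ y * ∫ z, u z * ((φ (z + y)) ^ 2 - (φ z) ^ 2)) := by
    have h : (fun y => ψδ y * ∫ z, u z * ((φ (z + y)) ^ 2 - (φ z) ^ 2))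
        = fun y => (ψδ y * ∫ z, u z * (φ (z + y)) ^ 2) - ψδ y * ∫ x, u x * (φ x) ^ 2 := by
      funext y
      rw [← mul_sub, ← integral_sub (hu1 y) hu2]
      congr 1
      refine integral_congr_ae (Filter.Eventually.of_forall fun z => ?_)
      simp only []; ring
    rw [h]
    exact hIA.sub hIC
  -- bound function and its integrability
  have hIbound : Integrable (fun y => ψδ y * (‖y‖ ^ 2 * (G2 / (2 * ε₁)) + 2 * ε₁)) := by
    have h : (fun y => ψδ y * (‖y‖ ^ 2 * (G2 / (2 * ε₁)) + 2 * ε₁))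
        = fun y => (ψδ y * ‖y‖ ^ 2) * (G2 / (2 * ε₁)) + ψδ y * (2 * ε₁) := by
      funext y; ring
    rw [h]
    exact (hψ_mom_integrable.mul_const _).add (hψ_integrable.mul_const _)
  -- pointwise bound
  have hpt : ∀ y, |ψδ y * ∫ z, u z * ((φ (z + y)) ^ 2 - (φ z) ^ 2)|
      ≤ ψδ y * (‖y‖ ^ 2 * (G2 / (2 * ε₁)) + 2 * ε₁) := by
    intro y
    rw [abs_mul, abs_of_nonneg (hψ_nonneg y)]
    have h1 : |∫ z, u z * ((φ (z + y)) ^ 2 - (φ z) ^ 2)|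
        ≤ ‖y‖ ^ 2 * (G2 / (2 * ε₁)) + 2 * ε₁ := by
      refine (hBy y).trans ?_
      have hs := Real.sq_sqrt hG2nn
      have h2 : 0 ≤ ‖y‖ := norm_nonneg y
      have h3 : 0 ≤ Real.sqrt G2 := Real.sqrt_nonneg _
      have key : 0 ≤ (‖y‖ * Real.sqrt G2 - 2 * ε₁) ^ 2 := sq_nonneg _
      have h2e : (0:ℝ) < 2 * ε₁ := by linarith
      have hkey2 : 2 * ‖y‖ * Real.sqrt G2 * (2 * ε₁) ≤ ‖y‖ ^ 2 * G2 + (2 * ε₁) ^ 2 := by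
        nlinarith [key, hs]
      calc 2 * ‖y‖ * Real.sqrt G2
          = (2 * ‖y‖ * Real.sqrt G2 * (2 * ε₁)) / (2 * ε₁) := by field_simp
        _ ≤ (‖y‖ ^ 2 * G2 + (2 * ε₁) ^ 2) / (2 * ε₁) := by gcongr
        _ = ‖y‖ ^ 2 * (G2 / (2 * ε₁)) + 2 * ε₁ := by field_simp
    exact mul_le_mul_of_nonneg_left h1 (hψ_nonneg y)
  -- final computation
  have hcomp : ∫ y, ψδ y * (‖y‖ ^ 2 * (G2 / (2 * ε₁)) + 2 * ε₁)
      = c₀ * δ ^ 2 * (G2 / (2 * ε₁)) + 2 * ε₁ := by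
    have h : (fun y => ψδ y * (‖y‖ ^ 2 * (G2 / (2 * ε₁)) + 2 * ε₁))
        = fun y => (ψδ y * ‖y‖ ^ 2) * (G2 / (2 * ε₁)) + ψδ y * (2 * ε₁) := by
      funext y; ring
    rw [h, integral_add (hψ_mom_integrable.mul_const _) (hψ_integrable.mul_const _),
      integral_mul_const, integral_mul_const, hψ_mom, hψ_int]
    ring
  rw [hmain]
  calc |∫ y, ψδ y * ∫ z, u z * ((φ (z + y)) ^ 2 - (φ z) ^ 2)|
      ≤ ∫ y, |ψδ y * ∫ z, u z * ((φ (z + y)) ^ 2 - (φ z) ^ 2)| :=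
        norm_integral_le_integral_norm (μ := volume)
          (fun y => ψδ y * ∫ z, u z * ((φ (z + y)) ^ 2 - (φ z) ^ 2))
    _ ≤ ∫ y, ψδ y * (‖y‖ ^ 2 * (G2 / (2 * ε₁)) + 2 * ε₁) :=
        integral_mono hIB.abs hIbound hpt
    _ = c₀ * δ ^ 2 * (G2 / (2 * ε₁)) + 2 * ε₁ := hcomp
    _ = c₀ * δ ^ 2 / ε₁ * (1 / 2 * G2) + 2 * ε₁ := by ring
end

section
/- Let H be the Legendre transform of the log-Laplace transform Λ of a bounded centered random variable, with m=essinf, M=esssup. For A>0, y>0, and f a continuous probability density on the torus T(A), the duality identity holds: sup_{a>0}{ a y − ∫_{T(A)} Λ(a f(x)) dx } = inf{ ∫_{Q(A)} H(u(x))dx : u∈B₁(A), ∫_{Q(A)} f(x)u(x)dx ≥ y }. -/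
open MeasureTheory ProbabilityTheory Filter Topology Set
open scoped ENNReal

/-!
Write `Λ = cgf ξ μ`, `L = Λ'` and `M = essSup ξ`. The Fenchel–Young inequality
`a f u - Λ (a f) ≤ H u`, integrated against the constraint `y ≤ ∫ f u`, gives weak duality.
Conversely, `Λ` is convex, so `H (L β) = β L β - Λ β`, and `L` increases continuously from
`L 0 = E ξ = 0` towards `M`. If `y < M`, the intermediate value theorem yields `a > 0` with
`∫ f L (a f) = y`, and `u = L (a f)` attains the dual value at `a`. If `y = M`, take `u = M` on
`{f > 0}`: there `H M` is the increasing limit of `α M - Λ α`, and monotone convergence bounds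
`∫ H u` by the dual supremum. If `y > M`, the bound `Λ α ≤ α M` makes the supremum infinite.
-/

lemma ConvexOn.add_deriv_mul_sub_le {f : ℝ → ℝ} (hf : ConvexOn ℝ univ f) {x : ℝ}
    (hfx : DifferentiableAt ℝ f x) (y : ℝ) : f x + deriv f x * (y - x) ≤ f y := by
  rcases lt_trichotomy x y with hxy | rfl | hyx
  · have h := hf.deriv_le_slope (mem_univ x) (mem_univ y) hxy hfx
    rw [slope_def_field, le_div_iff₀ (sub_pos.2 hxy)] at h
    linarith
  · simp
  · have h := hf.slope_le_deriv (mem_univ y) (mem_univ x) hyx hfx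
    rw [slope_def_field, div_le_iff₀ (sub_pos.2 hyx)] at h
    linarith

namespace ProbabilityTheory

variable {Ω : Type*} [MeasurableSpace Ω] {μ : Measure Ω} {X : Ω → ℝ}

section IntegrableExp

variable (hX : ∀ t, Integrable (fun ω ↦ Real.exp (t * X ω)) μ)
include hX

lemma mem_interior_integrableExpSet (t : ℝ) : t ∈ interior (integrableExpSet X μ) := by
  simp [show integrableExpSet X μ = univ from eq_univ_of_forall hX]

lemma analyticOnNhd_cgf_univ : AnalyticOnNhd ℝ (cgf X μ) univ := fun t _ ↦
  analyticAt_cgf (mem_interior_integrableExpSet hX t)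

lemma differentiable_cgf : Differentiable ℝ (cgf X μ) := fun t ↦
  (analyticOnNhd_cgf_univ hX t (mem_univ t)).differentiableAt

lemma differentiable_deriv_cgf : Differentiable ℝ (deriv (cgf X μ)) := fun t ↦
  ((analyticOnNhd_cgf_univ hX).deriv t (mem_univ t)).differentiableAt

lemma convexOn_cgf : ConvexOn ℝ univ (cgf X μ) := by
  refine convexOn_univ_of_deriv2_nonneg (differentiable_cgf hX) (differentiable_deriv_cgf hX)
    fun t ↦ ?_
  rw [← iteratedDeriv_eq_iterate,
    iteratedDeriv_two_cgf_eq_integral (mem_interior_integrableExpSet hX t)]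
  exact div_nonneg (integral_nonneg fun ω ↦ by positivity) mgf_nonneg

lemma cgf_add_deriv_cgf_mul_sub_le (s t : ℝ) :
    cgf X μ s + deriv (cgf X μ) s * (t - s) ≤ cgf X μ t :=
  (convexOn_cgf hX).add_deriv_mul_sub_le (differentiable_cgf hX s) t

variable [IsProbabilityMeasure μ]

lemma deriv_cgf_le_of_ae_le {b : ℝ} (hb : ∀ᵐ ω ∂μ, X ω ≤ b) (t : ℝ) :
    deriv (cgf X μ) t ≤ b := by
  have ht := mem_interior_integrableExpSet hX t
  have := isProbabilityMeasure_tilted (hX t)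
  rw [← integral_tilted_mul_self ht]
  have hb' := tilted_absolutelyContinuous μ (t * X ·) |>.ae_le hb
  simpa using integral_mono_ae ((memLp_tilted_mul ht 1).integrable le_rfl) (integrable_const b) hb'

lemma le_deriv_cgf_of_ae_le {a : ℝ} (ha : ∀ᵐ ω ∂μ, a ≤ X ω) (t : ℝ) :
    a ≤ deriv (cgf X μ) t := by
  have ht := mem_interior_integrableExpSet hX t
  have := isProbabilityMeasure_tilted (hX t)
  rw [← integral_tilted_mul_self ht]
  have ha' := tilted_absolutelyContinuous μ (t * X ·) |>.ae_le ha
  simpa using integral_mono_ae (integrable_const a) ((memLp_tilted_mul ht 1).integrable le_rfl) ha'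

lemma monotone_mul_sub_cgf {b : ℝ} (hb : ∀ᵐ ω ∂μ, X ω ≤ b) :
    Monotone fun t ↦ t * b - cgf X μ t := by
  refine monotone_of_deriv_nonneg ((differentiable_id.mul_const b).sub (differentiable_cgf hX))
    fun t ↦ ?_
  rw [((hasDerivAt_mul_const b).fun_sub (differentiable_cgf hX t).hasDerivAt).deriv]
  linarith [deriv_cgf_le_of_ae_le hX hb t]

lemma cgf_le_mul_of_ae_le {b : ℝ} (hb : ∀ᵐ ω ∂μ, X ω ≤ b) {t : ℝ} (ht : 0 ≤ t) :
    cgf X μ t ≤ t * b := by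
  have := monotone_mul_sub_cgf hX hb ht
  simp only [zero_mul, cgf_zero, sub_zero] at this
  linarith

lemma cgf_le_mul_deriv_cgf (t : ℝ) : cgf X μ t ≤ t * deriv (cgf X μ) t := by
  have := cgf_add_deriv_cgf_mul_sub_le hX t 0
  rw [cgf_zero] at this
  linarith

lemma deriv_cgf_zero_eq_integral : deriv (cgf X μ) 0 = μ[X] := by
  simp [deriv_cgf_zero (mem_interior_integrableExpSet hX 0)]

lemma cgf_nonneg (hX0 : μ[X] = 0) (t : ℝ) : 0 ≤ cgf X μ t := by
  simpa [deriv_cgf_zero_eq_integral hX, hX0] using cgf_add_deriv_cgf_mul_sub_le hX 0 t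

lemma tendsto_deriv_cgf_atTop (hbdd : IsBoundedUnder (· ≤ ·) (ae μ) X)
    (hcobdd : IsCoboundedUnder (· ≤ ·) (ae μ) X) :
    Tendsto (deriv (cgf X μ)) atTop (𝓝 (essSup X μ)) := by
  refine tendsto_order.2 ⟨fun t ht ↦ ?_, fun t ht ↦ Eventually.of_forall fun s ↦
    (deriv_cgf_le_of_ae_le hX (ae_le_essSup hbdd) s).trans_lt ht⟩
  obtain ⟨s, hts, hs⟩ := exists_between ht
  set p := μ.real {ω | s ≤ X ω}
  have hp : 0 < p := by
    refine ENNReal.toReal_pos (fun h0 ↦ ?_) (measure_ne_top _ _)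
    have hXs : ∀ᵐ ω ∂μ, X ω ≤ s := by
      rw [ae_iff]
      exact measure_mono_null (fun ω hω ↦ (not_le.1 hω).le) h0
    exact (essSup_le_of_ae_le s hXs hcobdd).not_gt hs
  -- The Chernoff bound gives `Λ α ≥ α s + log p`, and convexity gives `Λ α ≤ α L α`.
  have hlower : ∀ α, 0 < α → s + Real.log p / α ≤ deriv (cgf X μ) α := by
    intro α hα
    have hchernoff := Real.log_le_log hp (measure_ge_le_exp_cgf s hα.le (hX α))
    have htangent := cgf_le_mul_deriv_cgf hX α
    rw [Real.log_exp] at hchernoff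
    rw [add_comm, ← le_sub_iff_add_le, div_le_iff₀ hα]
    linarith
  have hlim : Tendsto (fun α ↦ s + Real.log p / α) atTop (𝓝 s) := by
    simpa using (tendsto_const_nhds (x := s)).add
      ((tendsto_const_nhds (x := Real.log p)).div_atTop tendsto_id)
  filter_upwards [hlim.eventually (lt_mem_nhds hts), eventually_gt_atTop 0] with α h1 h2
  exact h1.trans_le (hlower α h2)

end IntegrableExp

end ProbabilityTheory

section Legendre

noncomputable def legendreTransform (Λ : ℝ → ℝ) (y : ℝ) : ℝ≥0∞ := ⨆ α, ENNReal.ofReal (α * y - Λ α)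

variable {Λ : ℝ → ℝ}

lemma ofReal_mul_sub_le_legendreTransform (α y : ℝ) :
    ENNReal.ofReal (α * y - Λ α) ≤ legendreTransform Λ y :=
  le_iSup (fun α ↦ ENNReal.ofReal (α * y - Λ α)) α

lemma legendreTransform_eq_of_tangent {β ℓ : ℝ} (h : ∀ α, Λ β + ℓ * (α - β) ≤ Λ α) :
    legendreTransform Λ ℓ = ENNReal.ofReal (β * ℓ - Λ β) :=
  le_antisymm (iSup_le fun α ↦ ENNReal.ofReal_le_ofReal (by linarith [h α]))
    (ofReal_mul_sub_le_legendreTransform β ℓ)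

lemma legendreTransform_eq_iSup_nat {y : ℝ} (hmono : Monotone fun α ↦ α * y - Λ α) {c : ℝ}
    (hc : 0 < c) :
    legendreTransform Λ y = ⨆ n : ℕ, ENNReal.ofReal ((n + 1) * c * y - Λ ((n + 1) * c)) :=
  ((ENNReal.ofReal_mono.comp hmono).iSup_comp_tendsto_atTop
    ((tendsto_atTop_add_const_right _ 1 tendsto_natCast_atTop_atTop).atTop_mul_const hc)).symm

variable {E : Type*} [MeasurableSpace E] {ν : Measure E} {f : E → ℝ}

lemma ofReal_integral_le_lintegral_ofReal {g : E → ℝ} (hg : Integrable g ν) :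
    ENNReal.ofReal (∫ x, g x ∂ν) ≤ ∫⁻ x, ENNReal.ofReal (g x) ∂ν :=
  calc ENNReal.ofReal (∫ x, g x ∂ν)
      ≤ ENNReal.ofReal (∫ x, max (g x) 0 ∂ν) :=
        ENNReal.ofReal_le_ofReal (integral_mono hg hg.pos_part fun x ↦ le_max_left _ _)
    _ = ∫⁻ x, ENNReal.ofReal (g x) ∂ν := by
        rw [ofReal_integral_eq_lintegral_ofReal hg.pos_part
          (Eventually.of_forall fun x ↦ le_max_right _ _)]
        simp

lemma ofReal_sub_integral_le_lintegral_legendreTransform {Λ : ℝ → ℝ} {u : E → ℝ} {a y : ℝ}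
    (ha : 0 ≤ a) (hfu : Integrable (fun x ↦ f x * u x) ν)
    (hΛ : Integrable (fun x ↦ Λ (a * f x)) ν) (hy : y ≤ ∫ x, f x * u x ∂ν) :
    ENNReal.ofReal (a * y - ∫ x, Λ (a * f x) ∂ν) ≤ ∫⁻ x, legendreTransform Λ (u x) ∂ν :=
  calc ENNReal.ofReal (a * y - ∫ x, Λ (a * f x) ∂ν)
      ≤ ENNReal.ofReal (∫ x, (a * (f x * u x) - Λ (a * f x)) ∂ν) := by
        rw [integral_sub (hfu.const_mul a) hΛ, integral_const_mul]
        gcongr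
    _ ≤ ∫⁻ x, ENNReal.ofReal (a * (f x * u x) - Λ (a * f x)) ∂ν :=
        ofReal_integral_le_lintegral_ofReal ((hfu.const_mul a).sub hΛ)
    _ ≤ ∫⁻ x, legendreTransform Λ (u x) ∂ν := lintegral_mono fun x ↦ by
        simpa only [mul_assoc] using ofReal_mul_sub_le_legendreTransform (Λ := Λ) (a * f x) (u x)

lemma lintegral_ofReal_mul_sub_eq {Λ : ℝ → ℝ} {v : E → ℝ} {a : ℝ}
    (hfv : Integrable (fun x ↦ f x * v x) ν) (hΛ : Integrable (fun x ↦ Λ (a * f x)) ν)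
    (hle : ∀ x, Λ (a * f x) ≤ a * f x * v x) :
    ∫⁻ x, ENNReal.ofReal (a * f x * v x - Λ (a * f x)) ∂ν =
      ENNReal.ofReal (a * ∫ x, f x * v x ∂ν - ∫ x, Λ (a * f x) ∂ν) := by
  simp_rw [mul_assoc] at hle ⊢
  rw [← integral_const_mul, ← integral_sub (hfv.const_mul a) hΛ]
  exact (ofReal_integral_eq_lintegral_ofReal ((hfv.const_mul a).sub hΛ)
    (Eventually.of_forall fun x ↦ sub_nonneg.2 (hle x))).symm

end Legendre

section CgfDuality

variable {Ω : Type*} [MeasurableSpace Ω] {μ : Measure Ω} [IsProbabilityMeasure μ] {ξ : Ω → ℝ}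
  {E : Type*} [MeasurableSpace E] {ν : Measure E} {f : E → ℝ}

lemma integrable_exp_mul_of_abs_le_one (hξm : AEMeasurable ξ μ) (hξ : ∀ᵐ ω ∂μ, |ξ ω| ≤ 1)
    (t : ℝ) : Integrable (fun ω ↦ Real.exp (t * ξ ω)) μ :=
  integrable_exp_mul_of_mem_Icc hξm (hξ.mono fun _ h ↦ abs_le.1 h)

lemma abs_deriv_cgf_le_one (hξm : AEMeasurable ξ μ) (hξ : ∀ᵐ ω ∂μ, |ξ ω| ≤ 1) (t : ℝ) :
    |deriv (cgf ξ μ) t| ≤ 1 :=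
  have hX := integrable_exp_mul_of_abs_le_one hξm hξ
  abs_le.2 ⟨le_deriv_cgf_of_ae_le hX (hξ.mono fun _ h ↦ (abs_le.1 h).1) t,
    deriv_cgf_le_of_ae_le hX (hξ.mono fun _ h ↦ (abs_le.1 h).2) t⟩

lemma integrable_cgf_comp_mul (hξm : AEMeasurable ξ μ) (hξ : ∀ᵐ ω ∂μ, |ξ ω| ≤ 1)
    (hmean : μ[ξ] = 0) (hf : Integrable f ν) (hf0 : ∀ x, 0 ≤ f x) {a : ℝ} (ha : 0 ≤ a) :
    Integrable (fun x ↦ cgf ξ μ (a * f x)) ν := by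
  have hX := integrable_exp_mul_of_abs_le_one hξm hξ
  refine (hf.const_mul a).mono' ((differentiable_cgf hX).continuous.comp_aestronglyMeasurable
    (hf.1.const_mul a)) (Eventually.of_forall fun x ↦ ?_)
  have hafx : 0 ≤ a * f x := mul_nonneg ha (hf0 x)
  rw [Real.norm_of_nonneg (cgf_nonneg hX hmean _)]
  simpa using cgf_le_mul_of_ae_le hX (hξ.mono fun _ h ↦ (abs_le.1 h).2) hafx

lemma integral_cgf_comp_mul_le (hξm : AEMeasurable ξ μ) (hξ : ∀ᵐ ω ∂μ, |ξ ω| ≤ 1)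
    (hmean : μ[ξ] = 0) (hf : Integrable f ν) (hf0 : ∀ x, 0 ≤ f x) (hf1 : ∫ x, f x ∂ν = 1)
    {a : ℝ} (ha : 0 ≤ a) : ∫ x, cgf ξ μ (a * f x) ∂ν ≤ a * essSup ξ μ := by
  have hX := integrable_exp_mul_of_abs_le_one hξm hξ
  have hbdd : IsBoundedUnder (· ≤ ·) (ae μ) ξ :=
    isBoundedUnder_of_eventually_le (hξ.mono fun _ h ↦ (abs_le.1 h).2)
  calc ∫ x, cgf ξ μ (a * f x) ∂ν ≤ ∫ x, a * f x * essSup ξ μ ∂ν :=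
        integral_mono (integrable_cgf_comp_mul hξm hξ hmean hf hf0 ha)
          ((hf.const_mul a).mul_const _) fun x ↦
          cgf_le_mul_of_ae_le hX (ae_le_essSup hbdd) (mul_nonneg ha (hf0 x))
    _ = a * essSup ξ μ := by rw [integral_mul_const, integral_const_mul, hf1, mul_one]

lemma iSup_dual_eq_top_of_essSup_lt (hξm : AEMeasurable ξ μ) (hξ : ∀ᵐ ω ∂μ, |ξ ω| ≤ 1)
    (hmean : μ[ξ] = 0) (hf : Integrable f ν) (hf0 : ∀ x, 0 ≤ f x) (hf1 : ∫ x, f x ∂ν = 1)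
    {y : ℝ} (hy : essSup ξ μ < y) :
    ⨆ a : {a : ℝ // 0 < a}, ENNReal.ofReal (a * y - ∫ x, cgf ξ μ (a * f x) ∂ν) = ⊤ := by
  refine ENNReal.eq_top_of_forall_nnreal_le fun r ↦ ?_
  set a := (r + 1) / (y - essSup ξ μ)
  have ha : 0 < a := div_pos (by positivity) (sub_pos.2 hy)
  have hay : a * (y - essSup ξ μ) = r + 1 := div_mul_cancel₀ _ (sub_pos.2 hy).ne'
  have hΛ := integral_cgf_comp_mul_le hξm hξ hmean hf hf0 hf1 ha.le
  calc (r : ℝ≥0∞) = ENNReal.ofReal r := (ENNReal.ofReal_coe_nnreal).symm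
    _ ≤ ENNReal.ofReal (a * y - ∫ x, cgf ξ μ (a * f x) ∂ν) :=
        ENNReal.ofReal_le_ofReal (by linarith)
    _ ≤ _ := le_iSup (fun a : {a : ℝ // 0 < a} ↦
        ENNReal.ofReal (a * y - ∫ x, cgf ξ μ (a * f x) ∂ν)) ⟨a, ha⟩

lemma legendreTransform_cgf_zero (hξm : AEMeasurable ξ μ) (hξ : ∀ᵐ ω ∂μ, |ξ ω| ≤ 1)
    (hmean : μ[ξ] = 0) : legendreTransform (cgf ξ μ) 0 = 0 := by
  have hX := integrable_exp_mul_of_abs_le_one hξm hξ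
  rw [legendreTransform_eq_of_tangent (β := 0) fun α ↦ by simpa using cgf_nonneg hX hmean α]
  simp

lemma lintegral_legendreTransform_indicator_le (hξm : AEMeasurable ξ μ)
    (hξ : ∀ᵐ ω ∂μ, |ξ ω| ≤ 1) (hmean : μ[ξ] = 0) (hfm : Measurable f) (hf : Integrable f ν)
    (hf0 : ∀ x, 0 ≤ f x) (hf1 : ∫ x, f x ∂ν = 1) :
    ∫⁻ x, legendreTransform (cgf ξ μ) ({x | 0 < f x}.indicator (fun _ ↦ essSup ξ μ) x) ∂ν ≤
      ⨆ a : {a : ℝ // 0 < a}, ENNReal.ofReal (a * essSup ξ μ - ∫ x, cgf ξ μ (a * f x) ∂ν) := by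
  have hX := integrable_exp_mul_of_abs_le_one hξm hξ
  set M := essSup ξ μ
  have hξM : ∀ᵐ ω ∂μ, ξ ω ≤ M :=
    ae_le_essSup (isBoundedUnder_of_eventually_le (hξ.mono fun _ h ↦ (abs_le.1 h).2))
  set g : ℕ → E → ℝ≥0∞ := fun n x ↦
    ENNReal.ofReal ((n + 1) * f x * M - cgf ξ μ ((n + 1) * f x))
  have hg : ∀ x, legendreTransform (cgf ξ μ) ({x | 0 < f x}.indicator (fun _ ↦ M) x) =
      ⨆ n, g n x := by
    intro x
    rcases (hf0 x).lt_or_eq with hx | hx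
    · rw [indicator_of_mem (show x ∈ {x | 0 < f x} from hx)]
      exact legendreTransform_eq_iSup_nat (monotone_mul_sub_cgf hX hξM) hx
    · rw [indicator_of_notMem (by simp [← hx]), legendreTransform_cgf_zero hξm hξ hmean]
      simp [g, ← hx]
  have hg_meas : ∀ n, Measurable (g n) := fun n ↦ ENNReal.measurable_ofReal.comp
    ((((measurable_const.mul hfm).mul_const M)).sub
      ((differentiable_cgf hX).continuous.measurable.comp (measurable_const.mul hfm)))
  have hg_mono : Monotone g := fun m n hmn x ↦ ENNReal.ofReal_le_ofReal <|
    monotone_mul_sub_cgf hX hξM <| mul_le_mul_of_nonneg_right (by gcongr) (hf0 x)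
  rw [lintegral_congr hg, lintegral_iSup hg_meas hg_mono]
  refine iSup_le fun n ↦ le_of_eq_of_le ?_ (le_iSup _ ⟨n + 1, by positivity⟩)
  rw [lintegral_ofReal_mul_sub_eq (hf.mul_const M)
    (integrable_cgf_comp_mul hξm hξ hmean hf hf0 (by positivity))
    fun x ↦ cgf_le_mul_of_ae_le hX hξM (mul_nonneg (by positivity) (hf0 x)),
    integral_mul_const, hf1, one_mul]

lemma exists_pos_integral_mul_deriv_cgf_eq (hξm : AEMeasurable ξ μ) (hξ : ∀ᵐ ω ∂μ, |ξ ω| ≤ 1)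
    (hmean : μ[ξ] = 0) (hf : Integrable f ν) (hf0 : ∀ x, 0 ≤ f x) (hf1 : ∫ x, f x ∂ν = 1)
    {y : ℝ} (hy : 0 < y) (hyM : y < essSup ξ μ) :
    ∃ a, 0 < a ∧ ∫ x, f x * deriv (cgf ξ μ) (a * f x) ∂ν = y := by
  have hX := integrable_exp_mul_of_abs_le_one hξm hξ
  have hL : Continuous (deriv (cgf ξ μ)) := (differentiable_deriv_cgf hX).continuous
  set χ := fun a ↦ ∫ x, f x * deriv (cgf ξ μ) (a * f x) ∂ν
  have hmeas : ∀ a, AEStronglyMeasurable (fun x ↦ f x * deriv (cgf ξ μ) (a * f x)) ν :=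
    fun a ↦ hf.1.mul (hL.comp_aestronglyMeasurable (hf.1.const_mul a))
  have hbound : ∀ a, ∀ᵐ x ∂ν, ‖f x * deriv (cgf ξ μ) (a * f x)‖ ≤ f x := fun a ↦
    Eventually.of_forall fun x ↦ by
      rw [norm_mul, Real.norm_of_nonneg (hf0 x), Real.norm_eq_abs]
      exact mul_le_of_le_one_right (hf0 x) (abs_deriv_cgf_le_one hξm hξ _)
  have hχ : Continuous χ := continuous_of_dominated hmeas hbound hf
    (Eventually.of_forall fun x ↦ by fun_prop)
  have hχ0 : χ 0 = 0 := by simp [χ, deriv_cgf_zero_eq_integral hX, hmean]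
  have hχM : Tendsto χ atTop (𝓝 (essSup ξ μ)) := by
    have hLM := tendsto_deriv_cgf_atTop hX
      (isBoundedUnder_of_eventually_le (hξ.mono fun _ h ↦ (abs_le.1 h).2))
      (isCoboundedUnder_le_of_eventually_le _ (hξ.mono fun _ h ↦ (abs_le.1 h).1))
    have hpt : ∀ x, Tendsto (fun a ↦ f x * deriv (cgf ξ μ) (a * f x)) atTop
        (𝓝 (f x * essSup ξ μ)) := fun x ↦ by
      rcases (hf0 x).lt_or_eq with hx | hx
      · exact (hLM.comp (tendsto_id.atTop_mul_const hx)).const_mul (f x)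
      · simp [← hx]
    have := tendsto_integral_filter_of_dominated_convergence f (Eventually.of_forall hmeas)
      (Eventually.of_forall hbound) hf (Eventually.of_forall hpt)
    rwa [integral_mul_const, hf1, one_mul] at this
  obtain ⟨a₁, ha₁y, ha₁⟩ := ((hχM.eventually (lt_mem_nhds hyM)).and (eventually_ge_atTop 0)).exists
  obtain ⟨a, ha, hay⟩ :=
    intermediate_value_Icc ha₁ hχ.continuousOn ⟨by rw [hχ0]; exact hy.le, ha₁y.le⟩
  refine ⟨a, ha.1.lt_of_ne ?_, hay⟩
  rintro rfl
  exact hy.ne (hχ0.symm.trans hay)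

lemma lintegral_legendreTransform_deriv_cgf_eq (hξm : AEMeasurable ξ μ)
    (hξ : ∀ᵐ ω ∂μ, |ξ ω| ≤ 1) (hmean : μ[ξ] = 0) (hf : Integrable f ν) (hf0 : ∀ x, 0 ≤ f x)
    {a : ℝ} (ha : 0 ≤ a) :
    ∫⁻ x, legendreTransform (cgf ξ μ) (deriv (cgf ξ μ) (a * f x)) ∂ν =
      ENNReal.ofReal (a * ∫ x, f x * deriv (cgf ξ μ) (a * f x) ∂ν
        - ∫ x, cgf ξ μ (a * f x) ∂ν) := by
  have hX := integrable_exp_mul_of_abs_le_one hξm hξ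
  have hfL : Integrable (fun x ↦ f x * deriv (cgf ξ μ) (a * f x)) ν :=
    hf.mul_bdd ((differentiable_deriv_cgf hX).continuous.comp_aestronglyMeasurable
      (hf.1.const_mul a)) (Eventually.of_forall fun x ↦ abs_deriv_cgf_le_one hξm hξ _)
  rw [← lintegral_ofReal_mul_sub_eq hfL (integrable_cgf_comp_mul hξm hξ hmean hf hf0 ha)
    fun x ↦ cgf_le_mul_deriv_cgf hX _]
  exact lintegral_congr fun x ↦
    legendreTransform_eq_of_tangent (cgf_add_deriv_cgf_mul_sub_le hX (a * f x))

lemma exists_lintegral_legendreTransform_le_iSup (hξm : AEMeasurable ξ μ)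
    (hξ : ∀ᵐ ω ∂μ, |ξ ω| ≤ 1) (hmean : μ[ξ] = 0) (hfm : Measurable f) (hf : Integrable f ν)
    (hf0 : ∀ x, 0 ≤ f x) (hf1 : ∫ x, f x ∂ν = 1) {y : ℝ} (hy : 0 < y) (hyM : y ≤ essSup ξ μ) :
    ∃ u : E → ℝ, Measurable u ∧ (∀ x, |u x| ≤ 1) ∧ y ≤ ∫ x, f x * u x ∂ν ∧
      ∫⁻ x, legendreTransform (cgf ξ μ) (u x) ∂ν ≤
        ⨆ a : {a : ℝ // 0 < a}, ENNReal.ofReal (a * y - ∫ x, cgf ξ μ (a * f x) ∂ν) := by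
  have hX := integrable_exp_mul_of_abs_le_one hξm hξ
  rcases hyM.lt_or_eq with hyM | rfl
  · obtain ⟨a, ha, hay⟩ := exists_pos_integral_mul_deriv_cgf_eq hξm hξ hmean hf hf0 hf1 hy hyM
    refine ⟨fun x ↦ deriv (cgf ξ μ) (a * f x),
      (differentiable_deriv_cgf hX).continuous.measurable.comp (measurable_const.mul hfm),
      fun x ↦ abs_deriv_cgf_le_one hξm hξ _, hay.ge, ?_⟩
    rw [lintegral_legendreTransform_deriv_cgf_eq hξm hξ hmean hf hf0 ha.le, hay]
    exact le_iSup (fun a : {a : ℝ // 0 < a} ↦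
      ENNReal.ofReal (a * y - ∫ x, cgf ξ μ (a * f x) ∂ν)) ⟨a, ha⟩
  · have hM1 : essSup ξ μ ≤ 1 := essSup_le_of_ae_le 1 (hξ.mono fun _ h ↦ (abs_le.1 h).2)
      (isCoboundedUnder_le_of_eventually_le _ (hξ.mono fun _ h ↦ (abs_le.1 h).1))
    refine ⟨{x | 0 < f x}.indicator fun _ ↦ essSup ξ μ,
      measurable_const.indicator (measurableSet_lt measurable_const hfm), fun x ↦ ?_, ?_,
      lintegral_legendreTransform_indicator_le hξm hξ hmean hfm hf hf0 hf1⟩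
    · by_cases hx : 0 < f x
      · simpa [hx, abs_of_pos hy] using hM1
      · simp [hx]
    · have hfu : ∀ x, f x * {x | 0 < f x}.indicator (fun _ ↦ essSup ξ μ) x = f x * essSup ξ μ := by
        intro x
        rcases (hf0 x).lt_or_eq with hx | hx
        · simp [hx]
        · simp [← hx]
      simp_rw [hfu]
      rw [integral_mul_const, hf1, one_mul]

theorem iSup_dual_eq_iInf_lintegral_legendreTransform (hξm : AEMeasurable ξ μ)
    (hξ : ∀ᵐ ω ∂μ, |ξ ω| ≤ 1) (hmean : μ[ξ] = 0) (hfm : Measurable f) (hf0 : ∀ x, 0 ≤ f x)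
    (hf1 : ∫ x, f x ∂ν = 1) {y : ℝ} (hy : 0 < y) :
    ⨆ a : {a : ℝ // 0 < a}, ENNReal.ofReal (a * y - ∫ x, cgf ξ μ (a * f x) ∂ν) =
      ⨅ (u : E → ℝ) (_ : Measurable u) (_ : ∀ x, |u x| ≤ 1) (_ : y ≤ ∫ x, f x * u x ∂ν),
        ∫⁻ x, legendreTransform (cgf ξ μ) (u x) ∂ν := by
  have hf : Integrable f ν := by
    by_contra h
    simp [integral_undef h] at hf1
  refine le_antisymm (le_iInf₂ fun u hu ↦ le_iInf₂ fun hu1 hfu ↦ iSup_le fun a ↦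
    ofReal_sub_integral_le_lintegral_legendreTransform a.2.le
      (hf.mul_bdd hu.aestronglyMeasurable (Eventually.of_forall hu1))
      (integrable_cgf_comp_mul hξm hξ hmean hf hf0 a.2.le) hfu) ?_
  rcases le_or_gt y (essSup ξ μ) with hyM | hMy
  · obtain ⟨u, hu, hu1, hfu, hle⟩ :=
      exists_lintegral_legendreTransform_le_iSup hξm hξ hmean hfm hf hf0 hf1 hy hyM
    exact (iInf₂_le u hu).trans ((iInf₂_le hu1 hfu).trans hle)
  · rw [iSup_dual_eq_top_of_essSup_lt hξm hξ hmean hf hf0 hf1 hMy]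
    exact le_top

end CgfDuality

theorem stmt7_general {Ω : Type*} [MeasurableSpace Ω] (μ : Measure Ω) [IsProbabilityMeasure μ]
    (ξ : Ω → ℝ) (hmeas : Measurable ξ)
    (hbdd : ∀ᵐ ω ∂μ, |ξ ω| ≤ 1) (hmean : ∫ ω, ξ ω ∂μ = 0)
    (Λ : ℝ → ℝ)
    (hΛ : ∀ α : ℝ, Λ α = Real.log (∫ ω, Real.exp (α * ξ ω) ∂μ))
    (H : ℝ → ℝ≥0∞)
    (hH : ∀ y : ℝ, H y = ⨆ α : ℝ, ENNReal.ofReal (α * y - Λ α))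
    {d : ℕ} (y : ℝ) (hy : 0 < y)
    (Q : Set (EuclideanSpace ℝ (Fin d)))
    (f : EuclideanSpace ℝ (Fin d) → ℝ)
    (hf_cont : Continuous f) (hf_nonneg : ∀ x, 0 ≤ f x)
    (hf_prob : ∫ x in Q, f x = 1) :
    (⨆ a : {a : ℝ // 0 < a}, ENNReal.ofReal ((a : ℝ) * y - ∫ x in Q, Λ ((a : ℝ) * f x))) =
      ⨅ (u : EuclideanSpace ℝ (Fin d) → ℝ)
        (_ : Measurable u) (_ : ∀ x, |u x| ≤ 1) (_ : y ≤ ∫ x in Q, f x * u x),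
        ∫⁻ x in Q, H (u x) := by
  obtain rfl : Λ = cgf ξ μ := funext hΛ
  obtain rfl : H = legendreTransform (cgf ξ μ) := funext hH
  exact iSup_dual_eq_iInf_lintegral_legendreTransform hmeas.aemeasurable hbdd hmean
    hf_cont.measurable hf_nonneg hf_prob hy

/-- duality identity.  With `Λ` the log-Laplace transform of a
bounded centered random variable and `H` its Legendre transform, for `A > 0`,
`y > 0` and `f` a continuous probability density on the torus `T(A)`
(identified with the cube `Q(A)`),
`sup_{a>0} { a y − ∫ Λ(a f) } = inf { ∫ H(u) : u ∈ B₁(A), ∫ f u ≥ y }`. -/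
theorem stmt7 {Ω : Type*} [MeasurableSpace Ω] (μ : Measure Ω) [IsProbabilityMeasure μ]
    (ξ : Ω → ℝ) (hmeas : Measurable ξ)
    (hbdd : ∀ᵐ ω ∂μ, |ξ ω| ≤ 1) (hmean : ∫ ω, ξ ω ∂μ = 0)
    (Λ : ℝ → ℝ)
    (hΛ : ∀ α : ℝ, Λ α = Real.log (∫ ω, Real.exp (α * ξ ω) ∂μ))
    (H : ℝ → ℝ≥0∞)
    (hH : ∀ y : ℝ, H y = ⨆ α : ℝ, ENNReal.ofReal (α * y - Λ α))
    {d : ℕ} (A y : ℝ) (hA : 0 < A) (hy : 0 < y)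
    (Q : Set (EuclideanSpace ℝ (Fin d)))
    (hQ : Q = {x | ∀ i, |x i| ≤ A / 2})
    (f : EuclideanSpace ℝ (Fin d) → ℝ)
    (hf_cont : Continuous f) (hf_nonneg : ∀ x, 0 ≤ f x)
    (hf_prob : ∫ x in Q, f x = 1) :
    (⨆ a : {a : ℝ // 0 < a}, ENNReal.ofReal ((a : ℝ) * y - ∫ x in Q, Λ ((a : ℝ) * f x))) =
      ⨅ (u : EuclideanSpace ℝ (Fin d) → ℝ)
        (_ : Measurable u) (_ : ∀ x, |u x| ≤ 1) (_ : y ≤ ∫ x in Q, f x * u x),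
        ∫⁻ x in Q, H (u x) :=
  stmt7_general μ ξ hmeas hbdd hmean Λ hΛ H hH y hy Q f hf_cont hf_nonneg hf_prob
end
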